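/- arXiv:2108.02434 — 2 statements merged into one kernel-verified Lean document; each statement's English description precedes it below -/
import Mathlib

section
/- Let m, k be natural numbers, C a k×m real matrix, A₁₁, B₁₁ real m×m matrices, and define the (m+k)×(m+k) block matrices A = [[A₁₁, A₁₁Cᵀ], [C A₁₁, C A₁₁ Cᵀ]] and B = [[B₁₁, B₁₁Cᵀ], [C B₁₁, C B₁₁ Cᵀ]]. Then rank(B) = rank(B₁₁), and for every λ ∈ ℝ one has rank(A − λB) < rank(B) if and only if rank(A₁₁ − λB₁₁) < rank(B₁₁). -/
/-!
Both block matrices factor as `E * M * F` with `E = [1; C]` and `F = [1, Cᵀ]`. Since `E` has a left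
inverse `[1, 0]` and `F` a right inverse `[1; 0]`, this factorization preserves rank, and it is
linear in `M`, so it carries the pencil `A₁₁ - λ B₁₁` to `A - λ B`.
-/

open Matrix

namespace Matrix

variable {R : Type*} [CommSemiring R] {l m n o : Type*}

theorem fromBlocks_eq_fromRows_one_mul_mul_fromCols_one [Fintype m] [DecidableEq m]
    (C : Matrix l m R) (D : Matrix m o R) (M : Matrix m m R) :
    fromBlocks M (M * D) (C * M) (C * M * D) = fromRows (1 : Matrix m m R) C * M * fromCols 1 D := by
  simp [fromRows_mul, Matrix.mul_assoc]

variable [StrongRankCondition R] [Fintype l] [Fintype m] [Fintype n] [Fintype o]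

theorem rank_mul_mul_of_mul_eq_one [DecidableEq m] [DecidableEq n] {E : Matrix l m R}
    {F : Matrix n o R} {G : Matrix m l R} {H : Matrix o n R} (hGE : G * E = 1) (hFH : F * H = 1)
    (M : Matrix m n R) : (E * M * F).rank = M.rank := by
  refine le_antisymm ((rank_mul_le_left _ _).trans (rank_mul_le_right _ _)) ?_
  have hM : M = G * (E * M * F) * H := by
    simp only [← Matrix.mul_assoc, hGE, Matrix.one_mul]
    rw [Matrix.mul_assoc, hFH, Matrix.mul_one]
  calc M.rank = (G * (E * M * F) * H).rank := by rw [← hM]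
    _ ≤ (E * M * F).rank := (rank_mul_le_left _ _).trans (rank_mul_le_right _ _)

theorem rank_fromRows_one_mul_mul_fromCols_one [DecidableEq m] (C : Matrix l m R)
    (D : Matrix m o R) (M : Matrix m m R) :
    (fromRows (1 : Matrix m m R) C * M * fromCols (1 : Matrix m m R) D).rank = M.rank :=
  rank_mul_mul_of_mul_eq_one (G := fromCols 1 (0 : Matrix m l R))
    (H := fromRows 1 (0 : Matrix o m R))
    (by simp [fromCols_mul_fromRows]) (by simp [fromCols_mul_fromRows]) M

end Matrix

theorem stmt_4 {m k : ℕ} (C : Matrix (Fin k) (Fin m) ℝ)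
    (A₁₁ B₁₁ : Matrix (Fin m) (Fin m) ℝ)
    (A B : Matrix (Fin m ⊕ Fin k) (Fin m ⊕ Fin k) ℝ)
    (hA : A = Matrix.fromBlocks A₁₁ (A₁₁ * Cᵀ) (C * A₁₁) (C * A₁₁ * Cᵀ))
    (hB : B = Matrix.fromBlocks B₁₁ (B₁₁ * Cᵀ) (C * B₁₁) (C * B₁₁ * Cᵀ)) :
    B.rank = B₁₁.rank ∧
    ∀ lam : ℝ, (A - lam • B).rank < B.rank ↔ (A₁₁ - lam • B₁₁).rank < B₁₁.rank := by
  rw [fromBlocks_eq_fromRows_one_mul_mul_fromCols_one] at hA hB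
  have hB_rank : B.rank = B₁₁.rank := by
    rw [hB, rank_fromRows_one_mul_mul_fromCols_one]
  refine ⟨hB_rank, fun lam => ?_⟩
  have hpencil : A - lam • B = fromRows 1 C * (A₁₁ - lam • B₁₁) * fromCols 1 Cᵀ := by
    rw [hA, hB, Matrix.mul_sub, Matrix.mul_smul, Matrix.sub_mul, Matrix.smul_mul]
  rw [hpencil, rank_fromRows_one_mul_mul_fromCols_one, hB_rank]
end

section
/- Let A and B be real symmetric positive semidefinite n×n matrices such that every vector x with Bx = 0 also satisfies Ax = 0. Then rank(A − βB) ≤ rank(B) for every β ∈ ℝ, and rank(A − βB) = rank(B) for every β < 0. In particular, the maximum over β ∈ ℝ of rank(A − βB) equals rank(B). -/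
/-!
Since `ker B ⊆ ker A`, every `A - βB` kills `ker B`, so its rank is at most `rank B` by
rank–nullity. For `β < 0` the matrix `A - βB = A + (-β)B` is a sum of two positive
semidefinite matrices, whose kernel is the intersection of their kernels: `(A - βB)x = 0`
forces `x* A x = x* B x = 0`, hence `Bx = 0`, and the two kernels coincide.
-/

open Matrix
open scoped ComplexOrder

theorem LinearMap.finrank_range_le_of_ker_le {K V W W' : Type*} [DivisionRing K]
    [AddCommGroup V] [Module K V] [FiniteDimensional K V] [AddCommGroup W] [Module K W]
    [AddCommGroup W'] [Module K W'] {f : V →ₗ[K] W} {g : V →ₗ[K] W'}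
    (h : LinearMap.ker g ≤ LinearMap.ker f) :
    Module.finrank K (LinearMap.range f) ≤ Module.finrank K (LinearMap.range g) := by
  have hf := f.finrank_range_add_finrank_ker
  have hg := g.finrank_range_add_finrank_ker
  have hker := Submodule.finrank_mono h
  omega

namespace Matrix

variable {m m' n K 𝕜 : Type*} [Fintype n]

theorem rank_le_rank_of_ker_le [Field K] {M : Matrix m n K} {N : Matrix m' n K}
    (h : ∀ x, N *ᵥ x = 0 → M *ᵥ x = 0) : M.rank ≤ N.rank :=
  LinearMap.finrank_range_le_of_ker_le fun x hx ↦ h x hx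

theorem PosSemidef.mulVec_eq_zero_of_add_mulVec_eq_zero [RCLike 𝕜] {A B : Matrix n n 𝕜}
    (hA : A.PosSemidef) (hB : B.PosSemidef) {x : n → 𝕜} (hx : (A + B) *ᵥ x = 0) :
    B *ᵥ x = 0 := by
  have hsum : star x ⬝ᵥ A *ᵥ x + star x ⬝ᵥ B *ᵥ x = 0 := by
    rw [← dotProduct_add, ← add_mulVec, hx, dotProduct_zero]
  have hBx := ((add_eq_zero_iff_of_nonneg (hA.dotProduct_mulVec_nonneg x)
    (hB.dotProduct_mulVec_nonneg x)).mp hsum).2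
  exact (hB.dotProduct_mulVec_zero_iff x).mp hBx

end Matrix

theorem stmt_5 {n : ℕ} (A B : Matrix (Fin n) (Fin n) ℝ)
    (hA : A.PosSemidef) (hB : B.PosSemidef)
    (hker : ∀ x : Fin n → ℝ, B.mulVec x = 0 → A.mulVec x = 0) :
    (∀ β : ℝ, (A - β • B).rank ≤ B.rank) ∧
    (∀ β : ℝ, β < 0 → (A - β • B).rank = B.rank) ∧
    IsGreatest (Set.range fun β : ℝ => (A - β • B).rank) B.rank := by
  have hle (β : ℝ) : (A - β • B).rank ≤ B.rank :=
    rank_le_rank_of_ker_le fun x hx ↦ by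
      rw [sub_mulVec, smul_mulVec, hx, hker x hx, smul_zero, sub_zero]
  have heq (β : ℝ) (hβ : β < 0) : (A - β • B).rank = B.rank := by
    refine le_antisymm (hle β) (rank_le_rank_of_ker_le fun x hx ↦ ?_)
    have hBx : ((-β) • B) *ᵥ x = 0 := hA.mulVec_eq_zero_of_add_mulVec_eq_zero
      (hB.smul (neg_nonneg.mpr hβ.le)) (by rwa [neg_smul, ← sub_eq_add_neg])
    rwa [smul_mulVec, smul_eq_zero, or_iff_right (neg_ne_zero.mpr hβ.ne)] at hBx
  exact ⟨hle, heq, ⟨-1, heq (-1) (by norm_num)⟩, Set.forall_mem_range.mpr hle⟩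
end
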